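/- arXiv:1812.06538 — 2 statements merged into one kernel-verified Lean document; each statement's English description precedes it below -/
import Mathlib

section
/- For positive integers k, b, s and a variable t, Σ over all tuples of divisors (l_1,...,l_s) of k of N_k(b; l_1,...,l_s)·t^{l_1+...+l_s} equals (1/k) Σ_{d|k} c(b,d)·(k·M(t; k/d, k))^s. -/
/-! The left side counts the solutions of `x₁ + ⋯ + xₛ = b` in `(ℤ/kℤ)ˢ`, each weighted by
`t ^ ∑ gcd(xᵢ, k)`. Detecting the equation with the additive characters `e(j·/k)` of `ℤ/kℤ` turns
this into `(1/k) ∑ⱼ e(-jb/k) F(j)ˢ` with `F(j) = ∑ᵤ e(ju/k) t^gcd(u,k)`. Grouping `u` by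
`gcd(u, k) = w`, the inner sums are Ramanujan sums `c(j, k/w)`, so `F(j) = k·M(t; j, k)`; by the
Möbius formula `c(n, q) = ∑_{ad = q} μ(a) d [d ∣ n]`, this only depends on `gcd(j, k)`. Grouping `j`
by `gcd(j, k)` in the same way produces the Ramanujan sums `c(b, d)`. -/

open Finset

/-- Ramanujan sum. -/
noncomputable def ramc (n k : ℕ) : ℂ :=
  ∑ m ∈ (Finset.Icc 1 k).filter (fun m => Nat.gcd m k = 1),
    Complex.exp (2 * Real.pi * Complex.I * m * n / k)

/-- The `n`-necklace polynomial `M(t;n,k)`. -/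
noncomputable def neck (t : ℂ) (n k : ℕ) : ℂ :=
  (1 / (k : ℂ)) * ∑ d ∈ k.divisors, ramc n (k / d) * t ^ d

/-- `N_k(b; l_1,…,l_s)`. -/
noncomputable def Nk (k b s : ℕ) [NeZero k] (l : Fin s → ℕ) : ℕ :=
  Fintype.card {x : Fin s → ZMod k //
    (∑ i, x i) = (b : ZMod k) ∧ ∀ i, Nat.gcd (x i).val k = l i}

open ZMod

lemma AddChar.map_sum_eq_prod {ι A M : Type*} [AddCommMonoid A] [CommMonoid M]
    (ψ : AddChar A M) (s : Finset ι) (f : ι → A) :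
    ψ (∑ i ∈ s, f i) = ∏ i ∈ s, ψ (f i) :=
  map_prod ψ.toMonoidHom (fun i => Multiplicative.ofAdd (f i)) s

namespace ZMod

lemma sum_range_natCast {M : Type*} [AddCommMonoid M] {k : ℕ} [NeZero k] (f : ZMod k → M) :
    ∑ m ∈ range k, f m = ∑ u, f u :=
  Finset.sum_nbij' (fun m => (m : ZMod k)) ZMod.val (by simp) (by simp [ZMod.val_lt])
    (fun m hm => ZMod.val_cast_of_lt (mem_range.mp hm)) (fun u _ => natCast_zmod_val u)
    (fun _ _ => rfl)

lemma sum_Icc_natCast {M : Type*} [AddCommMonoid M] {k : ℕ} [NeZero k] (f : ZMod k → M) :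
    ∑ m ∈ Icc 1 k, f m = ∑ u, f u := by
  rw [← Ico_add_one_right_eq_Icc, sum_Ico_eq_sum_range, Nat.add_sub_cancel]
  push_cast
  rw [sum_range_natCast (fun u => f (1 + u))]
  exact Fintype.sum_equiv (Equiv.addLeft 1) _ _ fun _ => rfl

lemma gcd_val_neg {k : ℕ} [NeZero k] (u : ZMod k) : (-u).val.gcd k = u.val.gcd k := by
  rw [neg_val]
  split_ifs with hu
  · simp [hu]
  · exact Nat.gcd_self_sub_left (ZMod.val_lt u).le

lemma stdAddChar_natCast_mul {w q : ℕ} [NeZero w] [NeZero q] (a : ℕ) :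
    stdAddChar ((w * a : ℕ) : ZMod (w * q)) = stdAddChar (a : ZMod q) := by
  have hw : (w : ℂ) ≠ 0 := Nat.cast_ne_zero.mpr (NeZero.ne w)
  simp only [stdAddChar_apply, toCircle_natCast]
  push_cast
  congr 1
  field_simp

lemma sum_stdAddChar_mul {k : ℕ} [NeZero k] (n : ℕ) :
    ∑ u : ZMod k, stdAddChar (u * (n : ZMod k)) = if k ∣ n then (k : ℂ) else 0 := by
  rw [AddChar.sum_mulShift _ (isPrimitive_stdAddChar k)]
  simp only [natCast_eq_zero_iff, ZMod.card, Nat.cast_ite, Nat.cast_zero]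

end ZMod

lemma ramc_eq_sum_isUnit (n q : ℕ) [NeZero q] :
    ramc n q = ∑ v : ZMod q with IsUnit v, stdAddChar (v * (n : ZMod q)) := by
  rw [ramc, sum_filter, sum_filter,
    ← sum_Icc_natCast (fun v : ZMod q => if IsUnit v then stdAddChar (v * (n : ZMod q)) else 0)]
  refine sum_congr rfl fun m _ => ?_
  simp only [isUnit_iff_coprime, Nat.coprime_iff_gcd_eq_one]
  rw [← Nat.cast_mul, stdAddChar_apply, toCircle_natCast]
  push_cast
  ring_nf

lemma sum_stdAddChar_mul_filter_gcd {k : ℕ} [NeZero k] (n : ℕ) {w : ℕ} (hw : w ∣ k) :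
    ∑ u : ZMod k with u.val.gcd k = w, stdAddChar (u * (n : ZMod k)) = ramc n (k / w) := by
  obtain ⟨q, rfl⟩ := hw
  have : NeZero w := ⟨left_ne_zero_of_mul (NeZero.ne (w * q))⟩
  have : NeZero q := ⟨right_ne_zero_of_mul (NeZero.ne (w * q))⟩
  rw [Nat.mul_div_cancel_left _ (Nat.pos_of_ne_zero (NeZero.ne w)), ramc_eq_sum_isUnit]
  symm
  refine sum_nbij' (fun v => ((w * v.val : ℕ) : ZMod (w * q)))
    (fun u => ((u.val / w : ℕ) : ZMod q)) ?_ ?_ ?_ ?_ ?_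
  · simp only [mem_filter, mem_univ, true_and]
    intro v hv
    have hv' : v.val.Coprime q := (isUnit_iff_coprime v.val q).mp (by rwa [natCast_zmod_val])
    rw [val_cast_of_lt (Nat.mul_lt_mul_of_pos_left v.val_lt (NeZero.pos w)), Nat.gcd_mul_left,
      hv'.gcd_eq_one, mul_one]
  · simp only [mem_filter, mem_univ, true_and]
    intro u hu
    have h := Nat.gcd_div (hu ▸ Nat.gcd_dvd_left _ _) (dvd_mul_right w q)
    rw [hu, Nat.mul_div_cancel_left _ (NeZero.pos w), Nat.div_self (NeZero.pos w)] at h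
    exact (isUnit_iff_coprime _ q).mpr h
  · intro v _
    rw [val_cast_of_lt (Nat.mul_lt_mul_of_pos_left v.val_lt (NeZero.pos w)),
      Nat.mul_div_cancel_left _ (NeZero.pos w), natCast_zmod_val]
  · intro u hu
    have hwu : w ∣ u.val := by
      have h := Nat.gcd_dvd_left u.val (w * q)
      rwa [(mem_filter.mp hu).2] at h
    rw [val_cast_of_lt (Nat.div_lt_of_lt_mul u.val_lt), Nat.mul_div_cancel' hwu, natCast_zmod_val]
  · intro v _
    rw [← Nat.cast_mul, mul_assoc, stdAddChar_natCast_mul, Nat.cast_mul, natCast_zmod_val]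

lemma sum_stdAddChar_mul_gcd {k : ℕ} [NeZero k] (n : ℕ) (H : ℕ → ℂ) :
    ∑ u : ZMod k, stdAddChar (u * (n : ZMod k)) * H (u.val.gcd k)
      = ∑ w ∈ k.divisors, ramc n (k / w) * H w := by
  rw [← sum_fiberwise_of_maps_to (g := fun u : ZMod k => u.val.gcd k) (t := k.divisors)
    fun u _ => Nat.mem_divisors.mpr ⟨Nat.gcd_dvd_right _ _, NeZero.ne k⟩]
  refine sum_congr rfl fun w hw => ?_
  rw [← sum_stdAddChar_mul_filter_gcd n (Nat.dvd_of_mem_divisors hw), sum_mul]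
  exact sum_congr rfl fun u hu => by rw [(mem_filter.mp hu).2]

lemma sum_divisors_ramc (n : ℕ) {q : ℕ} (hq : 0 < q) :
    ∑ d ∈ q.divisors, ramc n d = if q ∣ n then (q : ℂ) else 0 := by
  have : NeZero q := NeZero.of_pos hq
  have h := sum_stdAddChar_mul_gcd (k := q) n 1
  simp only [Pi.one_apply, mul_one] at h
  rw [← sum_stdAddChar_mul, h, Nat.sum_div_divisors]

lemma ramc_eq_sum_moebius (n : ℕ) {q : ℕ} (hq : 0 < q) :
    ramc n q = ∑ x ∈ q.divisorsAntidiagonal,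
      (ArithmeticFunction.moebius x.1 : ℂ) * if x.2 ∣ n then (x.2 : ℂ) else 0 :=
  (ArithmeticFunction.sum_eq_iff_sum_mul_moebius_eq.mp
    (fun _ hq => sum_divisors_ramc n hq) q hq).symm

lemma ramc_gcd_of_dvd (n : ℕ) {q k : ℕ} (hk : k ≠ 0) (hq : q ∣ k) :
    ramc (n.gcd k) q = ramc n q := by
  have hq0 : 0 < q := Nat.pos_of_dvd_of_pos hq (Nat.pos_of_ne_zero hk)
  rw [ramc_eq_sum_moebius _ hq0, ramc_eq_sum_moebius _ hq0]
  refine sum_congr rfl fun x hx => ?_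
  have hxk : x.2 ∣ k := (Dvd.intro_left _ (Nat.mem_divisorsAntidiagonal.mp hx).1).trans hq
  simp only [Nat.dvd_gcd_iff, hxk, and_true]

lemma neck_gcd (t : ℂ) (n k : ℕ) : neck t (n.gcd k) k = neck t n k := by
  rcases eq_or_ne k 0 with rfl | hk
  · simp [neck]
  unfold neck
  congr 1
  refine sum_congr rfl fun d hd => ?_
  rw [ramc_gcd_of_dvd n hk (Nat.div_dvd_of_dvd (Nat.dvd_of_mem_divisors hd))]

lemma sum_stdAddChar_mul_pow_gcd {k : ℕ} [NeZero k] (j : ZMod k) (t : ℂ) :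
    ∑ u : ZMod k, stdAddChar (j * u) * t ^ u.val.gcd k = k * neck t (j.val.gcd k) k := by
  rw [neck_gcd, neck, ← mul_assoc, mul_one_div_cancel (Nat.cast_ne_zero.mpr (NeZero.ne k)),
    one_mul, ← sum_stdAddChar_mul_gcd, natCast_zmod_val]
  simp_rw [mul_comm j]

lemma sum_prod_filter_sum_eq {k : ℕ} [NeZero k] {ι : Type*} [Fintype ι] [DecidableEq ι]
    (b : ZMod k) (f : ZMod k → ℂ) :
    ∑ x : ι → ZMod k with ∑ i, x i = b, ∏ i, f (x i)
      = (1 / k) * ∑ j, stdAddChar (-(j * b)) *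
          (∑ u, stdAddChar (j * u) * f u) ^ Fintype.card ι := by
  have hk : (k : ℂ) ≠ 0 := Nat.cast_ne_zero.mpr (NeZero.ne k)
  have indicator (y : ZMod k) :
      (if y = 0 then (1 : ℂ) else 0) = (1 / k) * ∑ j, stdAddChar (j * y) := by
    rw [AddChar.sum_mulShift _ (isPrimitive_stdAddChar k), ZMod.card]
    split_ifs <;> simp [hk]
  calc ∑ x : ι → ZMod k with ∑ i, x i = b, ∏ i, f (x i)
      = ∑ x : ι → ZMod k, (if ∑ i, x i - b = 0 then 1 else 0) * ∏ i, f (x i) := by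
        simp only [sum_filter, sub_eq_zero, ite_mul, one_mul, zero_mul]
    _ = (1 / k) * ∑ j, ∑ x : ι → ZMod k, stdAddChar (j * (∑ i, x i - b)) * ∏ i, f (x i) := by
        simp only [indicator, mul_sum, sum_mul, mul_assoc]
        exact sum_comm
    _ = (1 / k) * ∑ j, stdAddChar (-(j * b)) *
          ∑ x : ι → ZMod k, ∏ i, (stdAddChar (j * x i) * f (x i)) := by
        congr 1
        refine sum_congr rfl fun j _ => ?_
        rw [mul_sum]
        refine sum_congr rfl fun x _ => ?_
        rw [prod_mul_distrib, ← AddChar.map_sum_eq_prod, ← mul_assoc, ← AddChar.map_add_eq_mul,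
          mul_sub, mul_sum, neg_add_eq_sub]
    _ = _ := by
        congr 1
        refine sum_congr rfl fun j _ => ?_
        rw [← Fintype.prod_sum fun (_ : ι) u => stdAddChar (j * u) * f u, prod_const, card_univ]

lemma sum_Nk_mul_pow (k b s : ℕ) [NeZero k] (t : ℂ) :
    ∑ l ∈ Fintype.piFinset (fun _ : Fin s => k.divisors), (Nk k b s l : ℂ) * t ^ (∑ i, l i)
      = ∑ x : Fin s → ZMod k with ∑ i, x i = (b : ZMod k), ∏ i, t ^ (x i).val.gcd k := by
  rw [← sum_fiberwise_of_maps_to (g := fun (x : Fin s → ZMod k) i => (x i).val.gcd k)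
    fun x _ => Fintype.mem_piFinset.mpr fun i =>
      Nat.mem_divisors.mpr ⟨Nat.gcd_dvd_right _ _, NeZero.ne k⟩]
  refine sum_congr rfl fun l _ => ?_
  have hcard :
      Nk k b s l = #{x : Fin s → ZMod k | ∑ i, x i = b ∧ (fun i => (x i).val.gcd k) = l} := by
    rw [Nk, Fintype.card_subtype]
    simp only [funext_iff]
  rw [hcard, filter_filter, card_eq_sum_ones, Nat.cast_sum, sum_mul]
  refine sum_congr rfl fun x hx => ?_
  rw [← (mem_filter.mp hx).2.2, prod_pow_eq_pow_sum, Nat.cast_one, one_mul]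

theorem stmt6_general (k b s : ℕ) [NeZero k] (t : ℂ) :
    ∑ l ∈ Fintype.piFinset (fun _ : Fin s => k.divisors),
        (Nk k b s l : ℂ) * t ^ (∑ i, l i)
      = (1 / (k : ℂ)) * ∑ d ∈ k.divisors, ramc b d * ((k : ℂ) * neck t (k / d) k) ^ s := by
  rw [sum_Nk_mul_pow, sum_prod_filter_sum_eq _ fun u => t ^ u.val.gcd k, Fintype.card_fin]
  simp only [sum_stdAddChar_mul_pow_gcd]
  congr 1
  calc ∑ j : ZMod k, stdAddChar (-(j * (b : ZMod k))) * (k * neck t (j.val.gcd k) k) ^ s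
      = ∑ j : ZMod k, stdAddChar (j * (b : ZMod k)) * (k * neck t (j.val.gcd k) k) ^ s :=
        Fintype.sum_equiv (Equiv.neg _) _ _ fun j => by simp [neg_mul, gcd_val_neg]
    _ = ∑ w ∈ k.divisors, ramc b (k / w) * (k * neck t w k) ^ s :=
        sum_stdAddChar_mul_gcd b fun w => ((k : ℂ) * neck t w k) ^ s
    _ = ∑ d ∈ k.divisors, ramc b d * (k * neck t (k / d) k) ^ s := by
        rw [← Nat.sum_div_divisors]
        refine sum_congr rfl fun w hw => ?_
        rw [Nat.div_div_self (Nat.dvd_of_mem_divisors hw) (NeZero.ne k)]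

theorem stmt6 (k b s : ℕ) [NeZero k] (hb : 0 < b) (hs : 0 < s) (t : ℂ) :
    ∑ l ∈ Fintype.piFinset (fun _ : Fin s => k.divisors),
        (Nk k b s l : ℂ) * t ^ (∑ i, l i)
      = (1 / (k : ℂ)) * ∑ d ∈ k.divisors, ramc b d * ((k : ℂ) * neck t (k / d) k) ^ s :=
  stmt6_general k b s t
end

section
/- The Dirichlet series of the Ramanujan sums satisfies Σ_{k≥1} c(n,k)/k^s = σ_{1−s}(n)/ζ(s) for Re(s) > 1, where σ_p(n) = Σ_{d|n} d^p. -/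
open Finset

/-!
Expanding the coprimality condition as `∑_{d ∣ gcd(m, k)} μ(d)` turns `c(n, k)` into
`∑_{d ∣ k} μ(d) ∑_{j ≤ k/d} exp(2πi jn/(k/d))`, and the inner sum of roots of unity is `k/d` or `0`
according as `k/d` divides `n` or not. Hence `c(n, ·)` is the Dirichlet convolution of `μ` with
the identity restricted to the divisors of `n`, so its L-series is the product of the finite sum
`∑_{d ∣ n} d^{1-s}` and `L(μ, s) = 1/ζ(s)`.
-/

open Complex ArithmeticFunction LSeries
open scoped Real LSeries.notation ArithmeticFunction.Moebius

lemma sum_Icc_pow_of_pow_eq_one {R : Type*} [DivisionRing R] [DecidableEq R] {z : R} {K : ℕ}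
    (hz : z ^ K = 1) : ∑ m ∈ Icc 1 K, z ^ m = if z = 1 then (K : R) else 0 := by
  split_ifs with h1
  · simp [h1]
  · have : ∑ m ∈ Icc 1 K, z ^ m = z * ∑ m ∈ range K, z ^ m := by
      rw [mul_sum, ← Ico_add_one_right_eq_Icc, sum_Ico_eq_sum_range]
      simp [pow_succ', add_comm]
    rw [this, geom_sum_eq h1, hz, sub_self, zero_div, mul_zero]

lemma sum_Icc_exp_two_pi_I_mul_div {K : ℕ} (hK : K ≠ 0) (n : ℕ) :
    ∑ m ∈ Icc 1 K, exp (2 * π * I * m * n / K) = if K ∣ n then (K : ℂ) else 0 := by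
  have hζ := isPrimitiveRoot_exp K hK
  have hpow : (exp (2 * π * I / K) ^ n) ^ K = 1 := by
    rw [pow_right_comm, hζ.pow_eq_one, one_pow]
  have hterm (m : ℕ) : exp (2 * π * I * m * n / K) = (exp (2 * π * I / K) ^ n) ^ m := by
    rw [← pow_mul, ← exp_nat_mul]
    push_cast
    ring_nf
  simp_rw [hterm, sum_Icc_pow_of_pow_eq_one hpow, hζ.pow_eq_one_iff_dvd]

lemma sum_filter_dvd_Icc_mul {M : Type*} [AddCommMonoid M] (f : ℕ → M) {d : ℕ} (hd : d ≠ 0)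
    (b : ℕ) : ∑ m ∈ Icc 1 (d * b) with d ∣ m, f m = ∑ j ∈ Icc 1 b, f (d * j) := by
  symm
  refine sum_nbij' (d * ·) (· / d) ?_ ?_ (fun j _ => ?_) (fun m hm => ?_) (fun _ _ => rfl)
  · intro j hj
    simp only [mem_filter, mem_Icc] at hj ⊢
    refine ⟨⟨?_, Nat.mul_le_mul_left d hj.2⟩, dvd_mul_right d j⟩
    nlinarith [Nat.one_le_iff_ne_zero.mpr hd]
  · intro m hm
    simp only [mem_filter, mem_Icc] at hm ⊢
    obtain ⟨⟨h1, h2⟩, a, rfl⟩ := hm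
    rw [Nat.mul_div_cancel_left a (Nat.pos_of_ne_zero hd)]
    exact ⟨Nat.pos_of_ne_zero (by rintro rfl; simp at h1),
      Nat.le_of_mul_le_mul_left h2 (Nat.pos_of_ne_zero hd)⟩
  · exact Nat.mul_div_cancel_left j (Nat.pos_of_ne_zero hd)
  · exact Nat.mul_div_cancel' (mem_filter.mp hm).2

lemma sum_divisors_moebius (R : Type*) [Ring R] (N : ℕ) :
    ∑ d ∈ N.divisors, (μ d : R) = if N = 1 then 1 else 0 := by
  have := congrArg (· N) (coe_moebius_mul_coe_zeta (R := R))
  simpa only [coe_mul_zeta_apply, one_apply, intCoe_apply] using this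

lemma sum_divisors_filter_dvd_moebius (R : Type*) [Ring R] {k : ℕ} (hk : k ≠ 0) (m : ℕ) :
    ∑ d ∈ k.divisors with d ∣ m, (μ d : R) = if m.gcd k = 1 then 1 else 0 := by
  have : {d ∈ k.divisors | d ∣ m} = (m.gcd k).divisors := by
    simp_rw [← Nat.divisors_filter_dvd_of_dvd hk (Nat.gcd_dvd_right m k), Nat.dvd_gcd_iff]
    exact filter_congr fun d hd => (and_iff_left (Nat.dvd_of_mem_divisors hd)).symm
  rw [this, sum_divisors_moebius]

lemma sum_Icc_filter_dvd_exp_two_pi_I_mul_div {d b : ℕ} (hd : d ≠ 0) (hb : b ≠ 0) (n : ℕ) :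
    ∑ m ∈ Icc 1 (d * b) with d ∣ m, exp (2 * π * I * m * n / (d * b : ℕ))
      = if b ∣ n then (b : ℂ) else 0 := by
  rw [sum_filter_dvd_Icc_mul _ hd, ← sum_Icc_exp_two_pi_I_mul_div hb]
  refine sum_congr rfl fun j _ => ?_
  have hd' : (d : ℂ) ≠ 0 := Nat.cast_ne_zero.mpr hd
  push_cast
  congr 1
  field_simp

lemma ramc_eq_sum_divisors_moebius (n : ℕ) {k : ℕ} (hk : k ≠ 0) :
    ramc n k = ∑ d ∈ k.divisors, (μ d : ℂ) * if k / d ∣ n then ((k / d : ℕ) : ℂ) else 0 := by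
  set e : ℕ → ℂ := fun m => exp (2 * π * I * m * n / k)
  calc ramc n k = ∑ m ∈ Icc 1 k, if m.gcd k = 1 then e m else 0 := sum_filter _ _
    _ = ∑ m ∈ Icc 1 k, (∑ d ∈ k.divisors with d ∣ m, (μ d : ℂ)) * e m := by
        simp_rw [sum_divisors_filter_dvd_moebius ℂ hk, ite_mul, one_mul, zero_mul]
    _ = ∑ d ∈ k.divisors, (μ d : ℂ) * ∑ m ∈ Icc 1 k with d ∣ m, e m := by
        simp_rw [sum_mul, mul_sum]
        exact sum_comm' fun m d => by simp only [mem_filter]; tauto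
    _ = _ := by
        refine sum_congr rfl fun d hd => ?_
        obtain ⟨b, rfl⟩ := Nat.dvd_of_mem_divisors hd
        have hd0 : d ≠ 0 := left_ne_zero_of_mul hk
        rw [Nat.mul_div_cancel_left b (Nat.pos_of_ne_zero hd0),
          sum_Icc_filter_dvd_exp_two_pi_I_mul_div hd0 (right_ne_zero_of_mul hk)]

def idOnDivisors (n : ℕ) (d : ℕ) : ℂ := if d ∣ n then d else 0

lemma ramc_eq_convolution (n : ℕ) {k : ℕ} (hk : k ≠ 0) : ramc n k = (idOnDivisors n ⍟ ↗μ) k := by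
  simp only [ramc_eq_sum_divisors_moebius n hk, convolution_def]
  rw [Nat.sum_divisorsAntidiagonal' fun a b => idOnDivisors n a * (μ b : ℂ)]
  exact sum_congr rfl fun d _ => mul_comm _ _

lemma LSeriesHasSum_idOnDivisors {n : ℕ} (hn : n ≠ 0) (s : ℂ) :
    LSeriesHasSum (idOnDivisors n) s (∑ d ∈ n.divisors, (d : ℂ) ^ (1 - s)) := by
  have hterm : ∀ d ∉ n.divisors, term (idOnDivisors n) s d = 0 := by
    intro d hd
    rcases eq_or_ne d 0 with rfl | hd0
    · exact term_zero _ _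
    · rw [term_of_ne_zero hd0, idOnDivisors, if_neg (fun h => hd (Nat.mem_divisors.mpr ⟨h, hn⟩)),
        zero_div]
  have hvalue :
      ∑ d ∈ n.divisors, (d : ℂ) ^ (1 - s) = ∑ d ∈ n.divisors, term (idOnDivisors n) s d := by
    refine sum_congr rfl fun d hd => ?_
    have hd0 : d ≠ 0 := Nat.ne_of_gt (Nat.pos_of_mem_divisors hd)
    rw [term_of_ne_zero hd0, idOnDivisors, if_pos (Nat.dvd_of_mem_divisors hd),
      cpow_sub _ _ (Nat.cast_ne_zero.mpr hd0), cpow_one]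
  exact hvalue ▸ hasSum_sum_of_ne_finset_zero hterm

lemma LSeriesHasSum_moebius {s : ℂ} (hs : 1 < s.re) : LSeriesHasSum ↗μ s (riemannZeta s)⁻¹ := by
  have hinv : riemannZeta s * L ↗μ s = 1 :=
    LSeries_one_eq_riemannZeta hs ▸ LSeries_one_mul_Lseries_moebius hs
  exact eq_inv_of_mul_eq_one_right hinv ▸ (LSeriesSummable_moebius_iff.mpr hs).LSeriesHasSum

lemma LSeriesHasSum_ramc {n : ℕ} (hn : n ≠ 0) {s : ℂ} (hs : 1 < s.re) :
    LSeriesHasSum (ramc n) s ((∑ d ∈ n.divisors, (d : ℂ) ^ (1 - s)) / riemannZeta s) :=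
  (LSeriesHasSum_congr _ _ (ramc_eq_convolution n)).mpr
    ((LSeriesHasSum_idOnDivisors hn s).convolution (LSeriesHasSum_moebius hs))

lemma LSeriesHasSum.tsum_div_nat_add_one_cpow {f : ℕ → ℂ} {s a : ℂ} (h : LSeriesHasSum f s a) :
    ∑' k : ℕ, f (k + 1) / ((k : ℂ) + 1) ^ s = a := by
  have := (hasSum_nat_add_iff' 1).mpr h
  simpa using this.tsum_eq

/-- `Σ_{k≥1} c(n,k)/k^s = σ_{1-s}(n)/ζ(s)` for `Re(s) > 1`. -/
theorem stmt16 (n : ℕ) (hn : 0 < n) (s : ℂ) (hs : 1 < s.re) :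
    ∑' k : ℕ, ramc n (k + 1) / ((k : ℂ) + 1) ^ s
      = (∑ d ∈ n.divisors, (d : ℂ) ^ ((1 : ℂ) - s)) / riemannZeta s :=
  (LSeriesHasSum_ramc hn.ne' hs).tsum_div_nat_add_one_cpow
end
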